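/- For every integer m ≥ 0, ∑_{j=1}^{m} φ(m-j|m) · ∑_{i=0}^{j-1} 1/(1 - y q^i) = ∑_{k=0}^{m-1} 1/(1 - μ y q^k), where φ(l|m) = y^l (μ;q)_l (y;q)_{m-l} / (μy;q)_m · [m choose l]_q. -/

import Mathlib

/-!
By the q-Chu–Vandermonde identity `∑ₗ y^l (μ;q)_l (y;q)_{m-l} [m l]_q = (μy;q)_m` the weights
`φ(l|m)` sum to `1`. Apply the Euler operator `y d/dy` to this identity: since
`y d/dy (y;q)_n = (y;q)_n (n - ∑_{i<n} 1/(1 - y q^i))` and `y d/dy y^l = l y^l`, the `l`-th term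
is multiplied by `m - ∑_{i<m-l} 1/(1 - y q^i)` and the right side by `m - ∑_{k<m} 1/(1 - μ y q^k)`.
Subtracting `m` times the identity itself and substituting `j = m - l` gives the claim.
-/

noncomputable def qPoch (z q : ℝ) (m : ℕ) : ℝ := ∏ j ∈ Finset.range m, (1 - z * q ^ j)

noncomputable def qBinom (q : ℝ) (m l : ℕ) : ℝ :=
  if l ≤ m then qPoch q q m / (qPoch q q l * qPoch q q (m - l)) else 0

noncomputable def phi (q μ y : ℝ) (l m : ℕ) : ℝ :=
  y ^ l * qPoch μ q l * qPoch y q (m - l) / qPoch (μ * y) q m * qBinom q m l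

open Finset

section QPochhammer

variable {z q : ℝ}

@[simp]
theorem qPoch_zero (z q : ℝ) : qPoch z q 0 = 1 := prod_range_zero _

theorem qPoch_succ (z q : ℝ) (n : ℕ) : qPoch z q (n + 1) = qPoch z q n * (1 - z * q ^ n) :=
  prod_range_succ _ _

theorem qPoch_ne_zero {n : ℕ} (h : ∀ j < n, 1 - z * q ^ j ≠ 0) : qPoch z q n ≠ 0 :=
  prod_ne_zero_iff.mpr fun j hj => h j (mem_range.mp hj)

theorem one_sub_mul_pow_ne_zero (hq : |q| ≠ 1) (j : ℕ) : 1 - q * q ^ j ≠ 0 := by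
  rw [← pow_succ', sub_ne_zero, ne_comm]
  intro h
  exact hq ((pow_eq_one_iff_of_nonneg (abs_nonneg q) j.succ_ne_zero).mp
    (by rw [← abs_pow, h, abs_one]))

theorem qPoch_self_ne_zero (hq : |q| ≠ 1) (n : ℕ) : qPoch q q n ≠ 0 :=
  qPoch_ne_zero fun j _ => one_sub_mul_pow_ne_zero hq j

@[fun_prop]
theorem differentiable_qPoch (q : ℝ) (n : ℕ) : Differentiable ℝ (fun w => qPoch w q n) := by
  unfold qPoch
  fun_prop

theorem mul_deriv_qPoch {n : ℕ} (h : ∀ j < n, 1 - z * q ^ j ≠ 0) :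
    z * deriv (fun w => qPoch w q n) z
      = qPoch z q n * (n - ∑ j ∈ range n, 1 / (1 - z * q ^ j)) := by
  have hlog : logDeriv (fun w => qPoch w q n) z = ∑ j ∈ range n, -q ^ j / (1 - z * q ^ j) := by
    unfold qPoch
    rw [logDeriv_prod (fun j hj => h j (mem_range.mp hj)) (fun j _ => by fun_prop)]
    refine sum_congr rfl fun j _ => ?_
    simp [logDeriv_apply]
  have hterm : ∀ j ∈ range n, z * (-q ^ j / (1 - z * q ^ j)) = 1 - 1 / (1 - z * q ^ j) := by
    intro j hj
    field_simp [h j (mem_range.mp hj)]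
    ring
  rw [← div_mul_cancel₀ (deriv _ z) (qPoch_ne_zero h), ← logDeriv_apply, hlog,
    mul_comm _ (qPoch z q n), mul_left_comm, mul_sum, sum_congr rfl hterm, sum_sub_distrib,
    sum_const, card_range, nsmul_one]

theorem mul_deriv_qPoch_mul (c : ℝ) {y : ℝ} {n : ℕ} (h : ∀ j < n, 1 - c * y * q ^ j ≠ 0) :
    y * deriv (fun w => qPoch (c * w) q n) y
      = qPoch (c * y) q n * (n - ∑ j ∈ range n, 1 / (1 - c * y * q ^ j)) := by
  rw [deriv_comp_mul_left c (fun w => qPoch w q n), smul_eq_mul, ← mul_assoc, mul_comm y c,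
    mul_deriv_qPoch h]

end QPochhammer

section QBinomial

variable {q : ℝ}

theorem qBinom_of_lt {m l : ℕ} (h : m < l) : qBinom q m l = 0 := if_neg (not_le.mpr h)

theorem qBinom_zero_right (hq : |q| ≠ 1) (m : ℕ) : qBinom q m 0 = 1 := by
  rw [qBinom, if_pos m.zero_le, qPoch_zero, one_mul, Nat.sub_zero,
    div_self (qPoch_self_ne_zero hq m)]

theorem qBinom_self (hq : |q| ≠ 1) (m : ℕ) : qBinom q m m = 1 := by
  rw [qBinom, if_pos le_rfl, Nat.sub_self, qPoch_zero, mul_one, div_self (qPoch_self_ne_zero hq m)]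

theorem qBinom_succ_succ (hq : |q| ≠ 1) (m l : ℕ) :
    qBinom q (m + 1) (l + 1) = qBinom q m (l + 1) + q ^ (m - l) * qBinom q m l := by
  rcases lt_trichotomy l m with h | rfl | h
  · obtain ⟨k, rfl⟩ := Nat.exists_eq_add_of_lt h
    rw [qBinom, qBinom, qBinom, if_pos (by omega), if_pos (by omega), if_pos (by omega),
      show l + k + 1 + 1 - (l + 1) = k + 1 by omega, show l + k + 1 - (l + 1) = k by omega,
      show l + k + 1 - l = k + 1 by omega, qPoch_succ q q (l + k + 1), qPoch_succ q q k,
      qPoch_succ q q l]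
    field_simp [qPoch_self_ne_zero hq, one_sub_mul_pow_ne_zero hq]
    ring
  · rw [qBinom_self hq, qBinom_self hq, qBinom_of_lt l.lt_succ_self, Nat.sub_self, pow_zero]
    ring
  · rw [qBinom_of_lt h, qBinom_of_lt (by omega), qBinom_of_lt (by omega)]
    ring

end QBinomial

noncomputable def phiNumer (q μ y : ℝ) (l m : ℕ) : ℝ :=
  y ^ l * qPoch μ q l * qPoch y q (m - l) * qBinom q m l

section PhiNumerator

variable {q : ℝ} (μ y : ℝ)

theorem phi_eq_phiNumer_div (l m : ℕ) :
    phi q μ y l m = phiNumer q μ y l m / qPoch (μ * y) q m :=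
  div_mul_eq_mul_div _ _ _

theorem phiNumer_of_lt {l m : ℕ} (h : m < l) : phiNumer q μ y l m = 0 := by
  rw [phiNumer, qBinom_of_lt h, mul_zero]

theorem phiNumer_zero_succ (hq : |q| ≠ 1) (m : ℕ) :
    phiNumer q μ y 0 (m + 1) = phiNumer q μ y 0 m * (1 - y * q ^ m) := by
  simp only [phiNumer, qBinom_zero_right hq, Nat.sub_zero, qPoch_succ]
  ring

theorem phiNumer_succ_succ (hq : |q| ≠ 1) (l m : ℕ) :
    phiNumer q μ y (l + 1) (m + 1)
      = phiNumer q μ y (l + 1) m * (1 - y * q ^ (m - (l + 1)))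
        + phiNumer q μ y l m * (y * q ^ (m - l) * (1 - μ * q ^ l)) := by
  have hfirst : qPoch y q (m - l) * qBinom q m (l + 1)
      = qPoch y q (m - (l + 1)) * (1 - y * q ^ (m - (l + 1))) * qBinom q m (l + 1) := by
    rcases lt_or_ge l m with h | h
    · rw [show m - l = m - (l + 1) + 1 by omega, qPoch_succ]
    · rw [qBinom_of_lt (by omega), mul_zero, mul_zero]
  simp only [phiNumer, Nat.add_sub_add_right, qBinom_succ_succ hq, qPoch_succ μ q l]
  linear_combination y ^ (l + 1) * qPoch μ q l * (1 - μ * q ^ l) * hfirst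

theorem sum_phiNumer (hq : |q| ≠ 1) (m : ℕ) :
    ∑ l ∈ range (m + 1), phiNumer q μ y l m = qPoch (μ * y) q m := by
  induction m with
  | zero => simp [phiNumer, qBinom_zero_right hq]
  | succ m ih =>
    calc ∑ l ∈ range (m + 2), phiNumer q μ y l (m + 1)
        = (∑ l ∈ range (m + 1), phiNumer q μ y (l + 1) m * (1 - y * q ^ (m - (l + 1)))
            + phiNumer q μ y 0 m * (1 - y * q ^ (m - 0)))
          + ∑ l ∈ range (m + 1), phiNumer q μ y l m * (y * q ^ (m - l) * (1 - μ * q ^ l)) := by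
          rw [sum_range_succ', sum_congr rfl fun l _ => phiNumer_succ_succ μ y hq l m,
            sum_add_distrib, phiNumer_zero_succ μ y hq, Nat.sub_zero]
          ring
      _ = ∑ l ∈ range (m + 1), phiNumer q μ y l m * (1 - y * q ^ (m - l))
          + ∑ l ∈ range (m + 1), phiNumer q μ y l m * (y * q ^ (m - l) * (1 - μ * q ^ l)) := by
          rw [← sum_range_succ' (fun l => phiNumer q μ y l m * (1 - y * q ^ (m - l))),
            sum_range_succ, phiNumer_of_lt μ y m.lt_succ_self, zero_mul, add_zero]
      _ = ∑ l ∈ range (m + 1), phiNumer q μ y l m * (1 - μ * y * q ^ m) := by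
          rw [← sum_add_distrib]
          refine sum_congr rfl fun l hl => ?_
          have hpow : q ^ (m - l) * q ^ l = q ^ m :=
            pow_sub_mul_pow q (Nat.lt_succ_iff.mp (mem_range.mp hl))
          linear_combination -(phiNumer q μ y l m * μ * y) * hpow
      _ = qPoch (μ * y) q (m + 1) := by rw [← sum_mul, ih, qPoch_succ]

end PhiNumerator

theorem mul_deriv_phiNumer {q : ℝ} (μ : ℝ) {y : ℝ} {l m : ℕ} (hl : l ≤ m)
    (hy : ∀ i < m - l, 1 - y * q ^ i ≠ 0) :
    y * deriv (fun w => phiNumer q μ w l m) y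
      = phiNumer q μ y l m * (m - ∑ i ∈ range (m - l), 1 / (1 - y * q ^ i)) := by
  have hfun : (fun w => phiNumer q μ w l m)
      = fun w => w ^ l * qPoch w q (m - l) * (qPoch μ q l * qBinom q m l) := by
    funext w
    rw [phiNumer]
    ring
  have hpow : y * (l * y ^ (l - 1)) = l * y ^ l := by
    rcases l.eq_zero_or_pos with rfl | hl0
    · simp
    · rw [mul_left_comm, mul_pow_sub_one hl0.ne']
  have hP := mul_deriv_qPoch hy
  rw [hfun, deriv_mul_const (by fun_prop), deriv_fun_mul (by fun_prop) (by fun_prop),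
    deriv_pow_field, phiNumer]
  push_cast [Nat.cast_sub hl] at hP ⊢
  linear_combination (qPoch μ q l * qBinom q m l) * (qPoch y q (m - l) * hpow + y ^ l * hP)

theorem sum_phiNumer_mul_sum_inv {q : ℝ} (μ y : ℝ) {m : ℕ} (hq : |q| ≠ 1)
    (hy : ∀ i < m, 1 - y * q ^ i ≠ 0) (hμy : ∀ k < m, 1 - μ * y * q ^ k ≠ 0) :
    ∑ l ∈ range (m + 1), phiNumer q μ y l m * ∑ i ∈ range (m - l), 1 / (1 - y * q ^ i)
      = qPoch (μ * y) q m * ∑ k ∈ range m, 1 / (1 - μ * y * q ^ k) := by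
  have hderiv : y * deriv (fun w => ∑ l ∈ range (m + 1), phiNumer q μ w l m) y
      = y * deriv (fun w => qPoch (μ * w) q m) y := by
    simp_rw [sum_phiNumer μ _ hq]
  rw [deriv_fun_sum fun l _ => by unfold phiNumer; fun_prop, mul_sum,
    sum_congr rfl fun l hl => mul_deriv_phiNumer μ (Nat.lt_succ_iff.mp (mem_range.mp hl))
      fun i hi => hy i (by omega),
    mul_deriv_qPoch_mul μ hμy] at hderiv
  simp only [mul_sub, sum_sub_distrib, ← sum_mul, sum_phiNumer μ y hq] at hderiv
  linear_combination -hderiv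

theorem phi_current_identity (q μ y : ℝ) (m : ℕ) (hq0 : 0 < q) (hq1 : q < 1)
    (hy : ∀ i < m, 1 - y * q ^ i ≠ 0) (hμy : ∀ k < m, 1 - μ * y * q ^ k ≠ 0) :
    ∑ j ∈ Finset.Icc 1 m, phi q μ y (m - j) m * (∑ i ∈ Finset.range j, 1 / (1 - y * q ^ i))
      = ∑ k ∈ Finset.range m, 1 / (1 - μ * y * q ^ k) := by
  have hq : |q| ≠ 1 := (abs_of_pos hq0).trans_ne hq1.ne
  calc ∑ j ∈ Icc 1 m, phi q μ y (m - j) m * ∑ i ∈ range j, 1 / (1 - y * q ^ i)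
      = ∑ l ∈ range m, phi q μ y l m * ∑ i ∈ range (m - l), 1 / (1 - y * q ^ i) := by
        refine sum_nbij' (m - ·) (m - ·) ?_ ?_ ?_ ?_ ?_ <;> intro j hj <;>
          simp only [mem_Icc, mem_range] at hj ⊢
        all_goals try omega
        rw [Nat.sub_sub_self hj.2]
    _ = ∑ l ∈ range (m + 1), phi q μ y l m * ∑ i ∈ range (m - l), 1 / (1 - y * q ^ i) := by
        rw [sum_range_succ, Nat.sub_self, sum_range_zero, mul_zero, add_zero]
    _ = (∑ l ∈ range (m + 1), phiNumer q μ y l m * ∑ i ∈ range (m - l), 1 / (1 - y * q ^ i))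
          / qPoch (μ * y) q m := by
        simp only [phi_eq_phiNumer_div, div_mul_eq_mul_div, sum_div]
    _ = ∑ k ∈ range m, 1 / (1 - μ * y * q ^ k) := by
        rw [sum_phiNumer_mul_sum_inv μ y hq hy hμy, mul_div_cancel_left₀ _ (qPoch_ne_zero hμy)]
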